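/- Let γ: [0,∞) → (0,∞) be C^2 with γ(0) = γ'(0) = 1, γ increasing and γ'' < 0, and set γ̃(s) = γ(s)∫_s^t dτ/γ(τ)^2 for s ∈ [0,t]. Then γ̃(s) ≤ (t-s)/γ(t) for all s ∈ [0,t]. -/

import Mathlib

/-!
Since `γ'' < 0`, on `[s, t]` the positive function `γ` lies above its chord `ℓ`, so
`∫ₛᵗ γ⁻² ≤ ∫ₛᵗ ℓ⁻²`. For affine `ℓ` the latter is exactly `(t - s) / (ℓ s * ℓ t)`, an
antiderivative of `ℓ⁻²` being `τ ↦ (τ - s) / (ℓ s * ℓ τ)`. Multiplying by `γ s = ℓ s` gives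
the bound.
-/

open Set intervalIntegral

noncomputable def chord (a b p q x : ℝ) : ℝ := ((b - x) * p + (x - a) * q) / (b - a)

theorem chord_pos {a b p q x : ℝ} (hab : a < b) (hp : 0 < p) (hq : 0 < q) (hx : x ∈ Icc a b) :
    0 < chord a b p q x := by
  have : 0 ≤ b - x := by linarith [hx.2]
  have : 0 ≤ x - a := by linarith [hx.1]
  exact div_pos (by nlinarith [min_le_left p q, min_le_right p q, lt_min hp hq]) (by linarith)

theorem hasDerivAt_chord (a b p q x : ℝ) :
    HasDerivAt (chord a b p q) ((q - p) / (b - a)) x :=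
  ((((hasDerivAt_id' x).const_sub b).mul_const p).add
    (((hasDerivAt_id' x).sub_const a).mul_const q)).div_const (b - a) |>.congr_deriv (by ring)

theorem continuousOn_chord_zpow_neg_two {a b p q : ℝ} (hab : a < b) (hp : 0 < p) (hq : 0 < q) :
    ContinuousOn (fun x => chord a b p q x ^ (-2 : ℤ)) (Icc a b) :=
  ContinuousOn.zpow₀ (fun x _ => (hasDerivAt_chord a b p q x).continuousAt.continuousWithinAt) _
    fun _ hx => Or.inl (chord_pos hab hp hq hx).ne'

theorem integral_chord_zpow_neg_two {a b p q : ℝ} (hab : a < b) (hp : 0 < p) (hq : 0 < q) :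
    ∫ x in a..b, chord a b p q x ^ (-2 : ℤ) = (b - a) / (p * q) := by
  have hba : b - a ≠ 0 := by linarith
  have hderiv : ∀ x ∈ uIcc a b,
      HasDerivAt (fun x => (x - a) / (p * chord a b p q x)) (chord a b p q x ^ (-2 : ℤ)) x := by
    intro x hx
    rw [uIcc_of_le hab.le] at hx
    have hℓx := (chord_pos hab hp hq hx).ne'
    refine (((hasDerivAt_id' x).sub_const a).div ((hasDerivAt_chord a b p q x).const_mul p)
      (by positivity)).congr_deriv ?_
    simp only [chord] at hℓx ⊢
    field_simp
    ring
  rw [integral_eq_sub_of_hasDerivAt hderiv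
    ((continuousOn_chord_zpow_neg_two hab hp hq).intervalIntegrable_of_Icc hab.le)]
  simp only [chord]
  field_simp
  ring

theorem ConcaveOn.chord_le {f : ℝ → ℝ} {a b x : ℝ} (hf : ConcaveOn ℝ (Icc a b) f) (hab : a < b)
    (hx : x ∈ Icc a b) : chord a b (f a) (f b) x ≤ f x := by
  have hba : 0 < b - a := by linarith
  have key := hf.2 (left_mem_Icc.2 hab.le) (right_mem_Icc.2 hab.le)
    (div_nonneg (by linarith [hx.2] : 0 ≤ b - x) hba.le)
    (div_nonneg (by linarith [hx.1] : 0 ≤ x - a) hba.le) (by field_simp; ring)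
  have hcomb : ((b - x) / (b - a)) • a + ((x - a) / (b - a)) • b = x := by
    simp only [smul_eq_mul]; field_simp; ring
  rw [hcomb, smul_eq_mul, smul_eq_mul] at key
  calc chord a b (f a) (f b) x
      = (b - x) / (b - a) * f a + (x - a) / (b - a) * f b := by simp only [chord]; ring
    _ ≤ f x := key

theorem zpow_neg_two_le_zpow_neg_two {x y : ℝ} (hx : 0 < x) (hxy : x ≤ y) :
    y ^ (-2 : ℤ) ≤ x ^ (-2 : ℤ) := by
  rw [zpow_neg, zpow_neg]
  exact inv_anti₀ (by positivity) (zpow_le_zpow_left₀ (by norm_num) hx.le hxy)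

theorem ConcaveOn.integral_zpow_neg_two_le {f : ℝ → ℝ} {a b : ℝ} (hab : a ≤ b)
    (hf : ConcaveOn ℝ (Icc a b) f) (hfc : ContinuousOn f (Icc a b))
    (hpos : ∀ x ∈ Icc a b, 0 < f x) :
    ∫ x in a..b, f x ^ (-2 : ℤ) ≤ (b - a) / (f a * f b) := by
  rcases hab.eq_or_lt with rfl | hab
  · simp
  have hfa := hpos a (left_mem_Icc.2 hab.le)
  have hfb := hpos b (right_mem_Icc.2 hab.le)
  rw [← integral_chord_zpow_neg_two hab hfa hfb]
  refine integral_mono_on hab.le ?_ ?_ fun x hx => ?_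
  · exact (hfc.zpow₀ _ fun x hx => Or.inl (hpos x hx).ne').intervalIntegrable_of_Icc hab.le
  · exact (continuousOn_chord_zpow_neg_two hab hfa hfb).intervalIntegrable_of_Icc hab.le
  · exact zpow_neg_two_le_zpow_neg_two (chord_pos hab hfa hfb hx) (hf.chord_le hab hx)

theorem auxiliary_gamma_tilde_bound
    (γ : ℝ → ℝ) (hγC2 : ContDiff ℝ 2 γ)
    (hγpos : ∀ s : ℝ, 0 ≤ s → 0 < γ s)
    (hγ'' : ∀ s : ℝ, 0 ≤ s → deriv (deriv γ) s < 0)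
    (t : ℝ) :
    ∀ s ∈ Set.Icc 0 t, γ s * (∫ τ in s..t, (γ τ) ^ (-2 : ℤ)) ≤ (t - s) / γ t := by
  intro s hs
  have hγ' : ContDiff ℝ 1 (deriv γ) := ContDiff.deriv' (n := 1) hγC2
  have hconcave : ConcaveOn ℝ (Ici 0) γ :=
    concaveOn_of_deriv2_nonpos (convex_Ici 0) hγC2.continuous.continuousOn
      (hγC2.differentiable two_ne_zero).differentiableOn
      (hγ'.differentiable one_ne_zero).differentiableOn
      fun x hx => (hγ'' x (interior_subset hx : x ∈ Ici 0)).le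
  have hsub : Icc s t ⊆ Ici 0 := fun x hx => hs.1.trans hx.1
  have hbound := (hconcave.subset hsub (convex_Icc s t)).integral_zpow_neg_two_le hs.2
    hγC2.continuous.continuousOn fun x hx => hγpos x (hsub hx)
  have hγs := hγpos s hs.1
  calc γ s * ∫ τ in s..t, γ τ ^ (-2 : ℤ) ≤ γ s * ((t - s) / (γ s * γ t)) := by gcongr
    _ = (t - s) / γ t := by field_simp
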